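/- arXiv:math/0212050 — 4 statements merged into one kernel-verified Lean document; each statement's English description precedes it below -/
import Mathlib

section
/- Let G be an abelian torsion group such that the n-torsion subgroup G[n] is finite for every positive integer n, and such that for every prime p the Tate module T_p G = lim← G[p^m] (inverse limit along multiplication-by-p maps) vanishes. Then every p-primary component G(p) of G is finite. -/
/-!
Write `D m` (`pDivisibleTorsion p m`) for the elements of `G[p^m]` divisible by every power
of `p`. Since `G[p^m]` is finite, the descending chain `G[p^m] ∩ p^k G` stabilises, so
`D m = G[p^m] ∩ p^K G` for some `K`. This makes multiplication by `p` map `D (m+1)` onto `D m`,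
so a nonzero element of `D 1` starts a nonzero element of `T_p G`. Hence `D 1 = 0`, and then
every `p`-power torsion element is killed by `p^K`, so `G(p) = G[p^K]` is finite.
-/

theorem Set.Finite.antitone_chain_condition {α : Type*} {S : ℕ → Set α} (h0 : (S 0).Finite)
    (hS : Antitone S) : ∃ K, ∀ k, K ≤ k → S K = S k := by
  have hfin (k : ℕ) : (S k).Finite := h0.subset (hS k.zero_le)
  obtain ⟨K, hK⟩ := WellFoundedLT.antitone_chain_condition (f := fun k => (hfin k).toFinset)
    fun i j hij => by simpa using hS hij
  exact ⟨K, fun k hk => by simpa using hK k hk⟩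

theorem Set.exists_seq_of_surjOn {α : Type*} {f : α → α} {D : ℕ → Set α}
    (hD : ∀ n, Set.SurjOn f (D (n + 1)) (D n)) {a : α} (ha : a ∈ D 0) :
    ∃ x : ℕ → α, x 0 = a ∧ ∀ n, x n ∈ D n ∧ f (x (n + 1)) = x n := by
  choose lift hlift hflift using hD
  let y : (n : ℕ) → D n := fun n => Nat.rec ⟨a, ha⟩ (fun n y => ⟨lift n y.2, hlift n y.2⟩) n
  exact ⟨fun n => (y n).1, rfl, fun n => ⟨(y n).2, hflift n (y n).2⟩⟩

section pDivisibleTorsion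

variable {G : Type*} [AddMonoid G] {p : ℕ}

def pDivisibleTorsion (p m : ℕ) : Set G := {x | p ^ m • x = 0 ∧ ∀ k, ∃ g, p ^ k • g = x}

theorem exists_inter_range_subset_pDivisibleTorsion {m : ℕ}
    (hfin : {x : G | p ^ m • x = 0}.Finite) :
    ∃ K, {x : G | p ^ m • x = 0} ∩ Set.range (p ^ K • ·) ⊆ pDivisibleTorsion p m := by
  set S : ℕ → Set G := fun k => {x | p ^ m • x = 0} ∩ Set.range (p ^ k • ·)
  have hS : Antitone S := by
    rintro i j hij x ⟨hx, g, rfl⟩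
    exact ⟨hx, p ^ (j - i) • g, by simp only [smul_smul, pow_mul_pow_sub p hij]⟩
  obtain ⟨K, hK⟩ := (hfin.subset Set.inter_subset_left).antitone_chain_condition hS
  refine ⟨K, fun x hx => ⟨hx.1, fun k => ?_⟩⟩
  have hx' : x ∈ S (max K k) := hK _ (le_max_left K k) ▸ hx
  exact (hS (le_max_right K k) hx').2

theorem surjOn_pDivisibleTorsion_succ {m : ℕ} (hfin : {x : G | p ^ (m + 1) • x = 0}.Finite) :
    Set.SurjOn (p • ·) (pDivisibleTorsion (G := G) p (m + 1)) (pDivisibleTorsion p m) := by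
  obtain ⟨K, hK⟩ := exists_inter_range_subset_pDivisibleTorsion hfin
  rintro x ⟨hx, hdiv⟩
  obtain ⟨g, rfl⟩ := hdiv (K + 1)
  refine ⟨p ^ K • g, hK ⟨?_, g, rfl⟩, ?_⟩
  · simp only [Set.mem_ofPred_eq, smul_smul, ← hx]
    ring_nf
  · simp only [smul_smul, pow_succ']

theorem exists_pow_smul_eq_zero_of_pDivisibleTorsion_one_subset
    (hfin : {x : G | p ^ 1 • x = 0}.Finite) (hD : pDivisibleTorsion (G := G) p 1 ⊆ {0}) :
    ∃ K, ∀ g : G, ∀ n, p ^ n • g = 0 → p ^ K • g = 0 := by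
  obtain ⟨K, hK⟩ := exists_inter_range_subset_pDivisibleTorsion hfin
  have hdescend (g : G) (n : ℕ) (hg : p ^ (K + n) • g = 0) : p ^ K • g = 0 := by
    induction n with
    | zero => exact hg
    | succ n ih =>
      refine ih (hD (hK ⟨?_, p ^ n • g, ?_⟩))
      · simp only [Set.mem_ofPred_eq, smul_smul, ← pow_add, ← hg]
        ring_nf
      · simp only [smul_smul, ← pow_add]
  refine ⟨K, fun g n hg => hdescend g n ?_⟩
  rw [pow_add, ← smul_smul, hg, smul_zero]

theorem exists_tate_seq_of_mem_pDivisibleTorsion_one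
    (hfin : ∀ m, {x : G | p ^ m • x = 0}.Finite) {a : G} (ha : a ∈ pDivisibleTorsion p 1) :
    ∃ x : ℕ → G, (∀ m, p ^ m • x m = 0) ∧ (∀ m, p • x (m + 1) = x m) ∧ x 1 = a := by
  obtain ⟨z, rfl, hz⟩ := Set.exists_seq_of_surjOn
    (D := fun n => pDivisibleTorsion (G := G) p (n + 1))
    (fun n => surjOn_pDivisibleTorsion_succ (hfin _)) ha
  refine ⟨fun | 0 => 0 | n + 1 => z n, ?_, ?_, rfl⟩
  · rintro (_ | n)
    · exact smul_zero _
    · exact (hz n).1.1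
  · rintro (_ | n)
    · simpa using (hz 0).1.1
    · exact (hz n).2

end pDivisibleTorsion

theorem stmt_2_general (G : Type*) [AddCommGroup G]
    (hfin : ∀ n : ℕ, 0 < n → {g : G | n • g = 0}.Finite)
    (hTate : ∀ p : ℕ, p.Prime → ∀ x : ℕ → G,
      (∀ m, p ^ m • x m = 0) → (∀ m, p • x (m + 1) = x m) → ∀ m, x m = 0) :
    ∀ p : ℕ, p.Prime → {g : G | ∃ k : ℕ, p ^ k • g = 0}.Finite := by
  intro p hp
  have hfin_pow (m : ℕ) : {g : G | p ^ m • g = 0}.Finite := hfin _ (pow_pos hp.pos m)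
  have hD : pDivisibleTorsion (G := G) p 1 ⊆ {0} := by
    intro a ha
    obtain ⟨x, hx0, hx, rfl⟩ := exists_tate_seq_of_mem_pDivisibleTorsion_one hfin_pow ha
    exact hTate p hp x hx0 hx 1
  obtain ⟨K, hK⟩ := exists_pow_smul_eq_zero_of_pDivisibleTorsion_one_subset (hfin_pow 1) hD
  exact (hfin_pow K).subset fun g ⟨n, hn⟩ => hK g n hn

/-- If `G` is a torsion abelian group with `G[n]` finite for every `n ≥ 1` and with
vanishing Tate module `T_p G = lim← G[p^m]` for every prime `p`, then every
`p`-primary component `G(p)` of `G` is finite. -/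
theorem stmt_2 (G : Type*) [AddCommGroup G]
    (htors : ∀ g : G, ∃ n : ℕ, 0 < n ∧ n • g = 0)
    (hfin : ∀ n : ℕ, 0 < n → {g : G | n • g = 0}.Finite)
    (hTate : ∀ p : ℕ, p.Prime → ∀ x : ℕ → G,
      (∀ m, p ^ m • x m = 0) → (∀ m, p • x (m + 1) = x m) → ∀ m, x m = 0) :
    ∀ p : ℕ, p.Prime → {g : G | ∃ k : ℕ, p ^ k • g = 0}.Finite :=
  stmt_2_general G hfin hTate
end

section
/- Let n be an odd positive integer, G a group, and V a module over Z/nZ which is free of rank 2, equipped with a G-action. Consider the exact sequence of G-modules 0 → (Z/nZ)·id → End(V) → End(V)/(Z/nZ)·id → 0, where G acts on End(V) by conjugation. Then the connecting homomorphism Hom(G, Z/nZ) = H^1(G, (Z/nZ)·id) → H^1(G, End(V)) is injective. -/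
/-- For `n` odd, `G` a group acting on a free `ℤ/nℤ`-module `V` of rank 2, the
connecting homomorphism `Hom(G, ℤ/nℤ) → H¹(G, End(V))` is injective: if the
cocycle `σ ↦ f(σ)·id` is a coboundary for the conjugation action, then `f = 0`. -/
theorem stmt_5 (n : ℕ) (hn : Odd n) (hn1 : 0 < n)
    (G : Type*) [Group G]
    (V : Type*) [AddCommGroup V] [Module (ZMod n) V]
    (b : Module.Basis (Fin 2) (ZMod n) V)
    (ρ : G →* (V ≃ₗ[ZMod n] V))
    (f : G → ZMod n) (hf : ∀ σ τ : G, f (σ * τ) = f σ + f τ)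
    (hcobound : ∃ φ : Module.End (ZMod n) V, ∀ σ : G,
      f σ • (LinearMap.id : Module.End (ZMod n) V) =
        (ρ σ).toLinearMap ∘ₗ φ ∘ₗ (ρ σ⁻¹).toLinearMap - φ) :
    ∀ σ : G, f σ = 0 := by
  rcases eq_or_lt_of_le (show 1 ≤ n from hn1) with h1 | h1
  · intro σ; haveI : Subsingleton (ZMod n) := by rw [← h1]; infer_instance
    exact Subsingleton.elim _ _
  haveI : Fact (1 < n) := ⟨h1⟩
  haveI : Module.Free (ZMod n) V := Module.Free.of_basis b
  haveI : Module.Finite (ZMod n) V := Module.Finite.of_basis b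
  obtain ⟨φ, hφ⟩ := hcobound
  intro σ
  have key : (ρ σ).toLinearMap ∘ₗ φ ∘ₗ (ρ σ⁻¹).toLinearMap = (ρ σ).conj φ := by
    rw [LinearEquiv.conj_apply, map_inv]
    rfl
  have ht := congrArg (LinearMap.trace (ZMod n) V) (hφ σ)
  rw [key, map_sub, LinearMap.trace_conj', sub_self, map_smul,
    LinearMap.trace_id, Module.finrank_eq_card_basis b] at ht
  simp only [Fintype.card_fin, Nat.cast_ofNat, smul_eq_mul] at ht
  have h2 : IsUnit (2 : ZMod n) := by
    have := (ZMod.isUnit_iff_coprime 2 n).mpr ((Nat.coprime_two_left).mpr hn)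
    simpa using this
  exact (h2.mul_right_eq_zero).mp (by rw [mul_comm]; exact ht)
end

section
/- Let n be an odd positive integer, G a group, and V a free Z/nZ-module of rank 2 with G-action such that the G-invariant endomorphisms End(V)^G are exactly the scalars (Z/nZ)·id. Then the G-invariants of End(V)/((Z/nZ)·id) are exactly the image of End(V)^G, i.e., (End(V)/(Z/nZ)·id)^G = 0. -/
/-- For `n` odd and `V` a free `ℤ/nℤ`-module of rank 2 with `G`-action whose invariant
endomorphisms are exactly the scalars, the `G`-invariants of `End(V)/(ℤ/nℤ)·id` are
exactly the image of the scalars: any `φ` whose conjugates differ from `φ` by scalars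
is itself a scalar. -/
theorem stmt_6 (n : ℕ) (hn : Odd n) (hn1 : 0 < n)
    (G : Type*) [Group G]
    (V : Type*) [AddCommGroup V] [Module (ZMod n) V]
    (b : Module.Basis (Fin 2) (ZMod n) V)
    (ρ : G →* (V ≃ₗ[ZMod n] V))
    (hinv : ∀ ψ : Module.End (ZMod n) V,
      (∀ σ : G, (ρ σ).toLinearMap ∘ₗ ψ ∘ₗ (ρ σ⁻¹).toLinearMap = ψ) →
        ∃ c : ZMod n, ψ = c • (LinearMap.id : Module.End (ZMod n) V)) :
    ∀ φ : Module.End (ZMod n) V,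
      (∀ σ : G, ∃ c : ZMod n,
        (ρ σ).toLinearMap ∘ₗ φ ∘ₗ (ρ σ⁻¹).toLinearMap - φ =
          c • (LinearMap.id : Module.End (ZMod n) V)) →
      ∃ c : ZMod n, φ = c • (LinearMap.id : Module.End (ZMod n) V) := by
  intro φ hφ
  rcases eq_or_lt_of_le (Nat.one_le_iff_ne_zero.mpr hn1.ne') with h1 | h1
  · -- n = 1 : everything is trivial
    have : Subsingleton (ZMod n) := by rw [← h1]; infer_instance
    have : Subsingleton V := by
      constructor; intro v w
      calc v = (1 : ZMod n) • v := (one_smul _ _).symm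
        _ = (0 : ZMod n) • v := by rw [Subsingleton.elim (1 : ZMod n) 0]
        _ = 0 := zero_smul _ _
        _ = (0 : ZMod n) • w := (zero_smul _ _).symm
        _ = (1 : ZMod n) • w := by rw [Subsingleton.elim (0 : ZMod n) 1]
        _ = w := one_smul _ _
    exact ⟨0, LinearMap.ext fun v => Subsingleton.elim _ _⟩
  · have : Nontrivial (ZMod n) := ZMod.nontrivial_iff.mpr (by omega)
    haveI : NeZero n := ⟨hn1.ne'⟩
    haveI : Module.Free (ZMod n) V := Module.Free.of_basis b
    haveI : Module.Finite (ZMod n) V := Module.Finite.of_basis b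
    have hrank : Module.finrank (ZMod n) V = 2 := by
      simpa using Module.finrank_eq_card_basis b
    apply hinv
    intro σ
    obtain ⟨c, hc⟩ := hφ σ
    -- compute traces
    have hcomp : (ρ σ⁻¹).toLinearMap ∘ₗ (ρ σ).toLinearMap = LinearMap.id := by
      ext v
      simp only [map_inv, LinearMap.comp_apply, LinearEquiv.coe_coe, LinearMap.id_apply]
      exact (ρ σ).symm_apply_apply v
    have htr : LinearMap.trace (ZMod n) V
        ((ρ σ).toLinearMap ∘ₗ φ ∘ₗ (ρ σ⁻¹).toLinearMap - φ) = 0 := by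
      rw [map_sub]
      have : LinearMap.trace (ZMod n) V ((ρ σ).toLinearMap ∘ₗ φ ∘ₗ (ρ σ⁻¹).toLinearMap)
          = LinearMap.trace (ZMod n) V φ := by
        rw [show (ρ σ).toLinearMap ∘ₗ φ ∘ₗ (ρ σ⁻¹).toLinearMap
            = (ρ σ).toLinearMap * (φ * (ρ σ⁻¹).toLinearMap) from rfl,
          LinearMap.trace_mul_comm]
        rw [show φ * (ρ σ⁻¹).toLinearMap * (ρ σ).toLinearMap
            = φ ∘ₗ ((ρ σ⁻¹).toLinearMap ∘ₗ (ρ σ).toLinearMap) from rfl, hcomp]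
        rfl
      rw [this, sub_self]
    rw [hc] at htr
    rw [map_smul, LinearMap.trace_id, hrank] at htr
    -- 2 c = 0 with 2 invertible since n odd
    have h2 : IsUnit (2 : ZMod n) := by
      have h22 : ((2:ℕ) : ZMod n) = 2 := by push_cast; ring
      rw [← h22, ZMod.isUnit_iff_coprime]
      simpa [Nat.coprime_two_left] using hn
    have hc0 : c = 0 := by
      have h2c : (2 : ZMod n) * c = 0 := by
        have h' : c * ((2:ℕ) : ZMod n) = 0 := htr
        push_cast at h'
        linear_combination h'
      exact h2.mul_right_eq_zero.mp h2c
    rw [hc0, zero_smul] at hc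
    exact sub_eq_zero.mp hc
end

section
/- Let M be a finite abelian group equipped with an alternating nondegenerate bilinear pairing M × M → Q/Z. Then M ≅ T × T for some finite abelian group T, and in particular the exponent of M divides the square root of the order of M. -/
open AddSubgroup

private lemma tor_lemma (e : ℕ) (he : 0 < e) (z : AddCircle (1 : ℚ)) (hz : e • z = 0) :
    ∃ k : ℤ, z = k • (((e : ℚ)⁻¹ : ℚ) : AddCircle (1 : ℚ)) := by
  induction z using QuotientAddGroup.induction_on with
  | H q =>
    have : ((e • q : ℚ) : AddCircle (1:ℚ)) = 0 := by rw [← hz]; rfl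
    rw [QuotientAddGroup.eq_zero_iff] at this
    obtain ⟨k, hk⟩ := this
    refine ⟨k, ?_⟩
    have hq : q = (k : ℚ) * (e : ℚ)⁻¹ := by
      have he' : (e : ℚ) ≠ 0 := by exact_mod_cast he.ne'
      field_simp
      simpa [zsmul_eq_mul, mul_comm, eq_comm] using hk
    rw [hq, ← QuotientAddGroup.mk_zsmul]
    norm_num [zsmul_eq_mul]

private lemma aux_sq : ∀ (n : ℕ) (M : Type u) [AddCommGroup M] [Finite M]
    (b : M →+ M →+ AddCircle (1 : ℚ)),
    (∀ x, b x x = 0) → (∀ x, (∀ y, b x y = 0) → x = 0) → Nat.card M ≤ n →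
    ∃ (T : Type) (_ : AddCommGroup T) (_ : Finite T), Nonempty (M ≃+ T × T) := by
  intro n
  induction n using Nat.strong_induction_on with
  | _ n ih =>
    intro M _ _ b halt hnd hcard
    by_cases hsub : ∀ m : M, m = 0
    · refine ⟨PUnit, inferInstance, inferInstance, ⟨?_⟩⟩
      exact
        { toFun := fun _ => (0, 0)
          invFun := fun _ => 0
          left_inv := fun m => (hsub m).symm
          right_inv := fun p => Subsingleton.elim _ _
          map_add' := fun _ _ => by simp }
    push_neg at hsub
    obtain ⟨m₀, hm₀⟩ := hsub
    -- skew symmetry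
    have hskew : ∀ a c : M, b a c = - b c a := by
      intro a c
      have h := halt (a + c)
      simp only [map_add, AddMonoidHom.add_apply, halt, zero_add, add_zero] at h
      exact eq_neg_of_add_eq_zero_left (by rw [← h]; abel)
    set e := AddMonoid.exponent M with hedef
    have hee : AddMonoid.ExponentExists M := AddMonoid.ExponentExists.of_finite
    have he0 : 0 < e := hee.exponent_pos
    have hez : ∀ z : M, e • z = 0 := fun z => AddMonoid.exponent_nsmul_eq_zero z
    have he1 : 1 < e := by
      have : e ≠ 1 := fun h => hm₀ (by simpa [h] using hez m₀)
      omega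
    haveI : NeZero e := ⟨he0.ne'⟩
    obtain ⟨x, hx⟩ := AddMonoid.exists_addOrderOf_eq_exponent hee
    -- the distinguished torsion point u of order e
    set u : AddCircle (1 : ℚ) := (((e : ℚ)⁻¹ : ℚ) : AddCircle (1 : ℚ)) with hu
    have heu : (e : ℤ) • u = 0 := by
      rw [hu, ← QuotientAddGroup.mk_zsmul, QuotientAddGroup.eq_zero_iff]
      refine ⟨1, ?_⟩
      have he' : (e : ℚ) ≠ 0 := by exact_mod_cast he0.ne'
      field_simp [zsmul_eq_mul]
      simp [zsmul_eq_mul, he']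
    -- every value of b is e-torsion
    have hbtor : ∀ z w : M, e • (b z w) = 0 := by
      intro z w
      rw [← map_nsmul, hez, map_zero]
    -- find y such that g := b x y generates all values b x z
    have hI : ∀ z : M, ∃ k : ℤ, b x z = k • u := fun z => tor_lemma e he0 _ (hbtor x z)
    obtain ⟨d₀, hd₀⟩ := Int.subgroup_cyclic
      (AddSubgroup.comap ((zmultiplesHom (AddCircle (1:ℚ))) u) (b x).range)
    have hd₀mem : d₀ ∈ AddSubgroup.comap ((zmultiplesHom (AddCircle (1:ℚ))) u) (b x).range := by
      rw [hd₀]; exact AddSubgroup.subset_closure rfl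
    obtain ⟨y, hy⟩ : ∃ y : M, b x y = d₀ • u := by
      simpa [AddSubgroup.mem_comap, AddMonoidHom.mem_range] using hd₀mem
    set g : AddCircle (1:ℚ) := b x y with hg
    have hgen : ∀ z : M, ∃ m : ℤ, b x z = m • g := by
      intro z
      obtain ⟨k, hk⟩ := hI z
      have hkmem : k ∈ AddSubgroup.comap ((zmultiplesHom (AddCircle (1:ℚ))) u) (b x).range := by
        simp only [AddSubgroup.mem_comap, AddMonoidHom.mem_range]
        exact ⟨z, by simpa using hk⟩
      rw [hd₀, AddSubgroup.mem_closure_singleton] at hkmem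
      obtain ⟨m, hm⟩ := hkmem
      exact ⟨m, by rw [hk, ← hm, smul_eq_mul, mul_smul, ← hy]⟩
    -- order of g is exactly e
    have hko : ∀ k : ℤ, k • g = 0 ↔ (e : ℤ) ∣ k := by
      intro k
      constructor
      · intro hkg
        have : k • x = 0 := by
          apply hnd
          intro z
          obtain ⟨m, hm⟩ := hgen z
          have : b (k • x) z = k • (b x z) := by simp
          rw [this, hm, smul_comm, hkg, smul_zero]
        have h2 := (addOrderOf_dvd_iff_zsmul_eq_zero).mpr this
        rwa [hx, ← hedef] at h2
      · rintro ⟨m, rfl⟩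
        have heg : (e : ℤ) • g = 0 := by
          rw [hg, ← map_zsmul]
          have : (e : ℤ) • y = 0 := by rw [natCast_zsmul]; exact hez y
          rw [this, map_zero]
        rw [mul_comm, mul_smul, heg, smul_zero]
    -- u is a multiple of g
    have hcop : IsCoprime d₀ (e : ℤ) := by
      rw [Int.isCoprime_iff_gcd_eq_one]
      by_contra hne
      obtain ⟨d₀', hd₀'⟩ := Int.gcd_dvd_left (a := d₀) (b := (e : ℤ))
      obtain ⟨e', he'⟩ := Int.gcd_dvd_right (a := d₀) (b := (e : ℤ))
      have key : e' * d₀ = d₀' * (e : ℤ) := by linear_combination e' * hd₀' - d₀' * he'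
      have hg0 : e' • g = 0 := by
        rw [hy, smul_smul, key, mul_smul, heu, smul_zero]
      obtain ⟨t, ht⟩ := (hko e').mp hg0
      have henz : (e : ℤ) ≠ 0 := by exact_mod_cast he0.ne'
      have hcancel : (1 : ℤ) = (Int.gcd d₀ (e:ℤ) : ℤ) * t := by
        have h2 : (e : ℤ) * 1 = (e : ℤ) * ((Int.gcd d₀ (e:ℤ) : ℤ) * t) := by
          rw [mul_one]
          calc (e : ℤ) = (Int.gcd d₀ (e:ℤ) : ℤ) * e' := he'
            _ = (Int.gcd d₀ (e:ℤ) : ℤ) * ((e:ℤ) * t) := by rw [← ht]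
            _ = (e : ℤ) * ((Int.gcd d₀ (e:ℤ) : ℤ) * t) := by ring
        exact mul_left_cancel₀ henz h2
      rcases Int.mul_eq_one_iff_eq_one_or_neg_one.mp hcancel.symm with ⟨h1, _⟩ | ⟨h1, _⟩
      · exact hne (by exact_mod_cast h1)
      · omega
    obtain ⟨a, c, hac⟩ := hcop
    have hug : u = a • g := by
      have h1 : ((a * d₀ + c * e) : ℤ) • u = u := by rw [hac, one_smul]
      rw [← h1, add_smul, mul_smul, mul_smul, heu, smul_zero, add_zero, ← hy]
    -- all values of b lie in the cyclic group generated by g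
    have htor_g : ∀ z : AddCircle (1:ℚ), e • z = 0 → ∃ k : ℤ, z = k • g := by
      intro z hz
      obtain ⟨k, hk⟩ := tor_lemma e he0 z hz
      exact ⟨k * a, by rw [hk, ← hu, hug, smul_smul]⟩
    choose cx hcx using fun z : M => htor_g _ (hbtor x z)
    choose cy hcy using fun z : M => htor_g _ (hbtor y z)
    -- congruence helpers
    have hdiff : ∀ k l : ℤ, k • g = l • g → (e : ℤ) ∣ (k - l) := fun k l h =>
      (hko _).mp (by rw [sub_smul, h, sub_self])
    have hcast : ∀ k l : ℤ, k • g = l • g → (k : ZMod e) = (l : ZMod e) := by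
      intro k l h
      have h0 := (ZMod.intCast_zmod_eq_zero_iff_dvd (k - l) e).mpr (hdiff k l h)
      push_cast at h0
      linear_combination h0
    have hEz : ∀ (z : M) (k : ℤ), (e : ℤ) ∣ k → k • z = 0 := by
      rintro z k ⟨t, rfl⟩
      have h1 : (e : ℤ) • z = 0 := by rw [natCast_zsmul]; exact hez z
      rw [mul_comm, mul_smul, h1, smul_zero]
    have hyx : b y x = -g := by rw [hskew y x, ← hg]
    -- the subgroup P
    set P : AddSubgroup M := (b x).ker ⊓ (b y).ker with hP
    have hmemP : ∀ m : M, m ∈ P ↔ b x m = 0 ∧ b y m = 0 := by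
      intro m
      simp [hP, AddSubgroup.mem_inf, AddMonoidHom.mem_ker]
    have hπ : ∀ m : M, m + cy m • x - cx m • y ∈ P := by
      intro m
      rw [hmemP]
      constructor
      · have hexp : b x (m + cy m • x - cx m • y)
            = b x m + cy m • (b x x) - cx m • (b x y) := by
          rw [map_sub, map_add, map_zsmul, map_zsmul]
        rw [hexp, halt, smul_zero, add_zero, hcx, ← hg, sub_self]
      · have hexp : b y (m + cy m • x - cx m • y)
            = b y m + cy m • (b y x) - cx m • (b y y) := by
          rw [map_sub, map_add, map_zsmul, map_zsmul]
        rw [hexp, halt, smul_zero, sub_zero, hcy, hyx, smul_neg, add_neg_cancel]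
    -- the isomorphism with (ZMod e × ZMod e) × P
    have hcx_add : ∀ m m' : M, (cx (m + m') : ZMod e) = cx m + cx m' := by
      intro m m'
      have : cx (m + m') • g = ((cx m + cx m') : ℤ) • g := by
        rw [← hcx, add_smul, ← hcx, ← hcx, map_add]
      have h := hcast _ _ this
      push_cast at h
      exact h
    have hcy_add : ∀ m m' : M, (cy (m + m') : ZMod e) = cy m + cy m' := by
      intro m m'
      have : cy (m + m') • g = ((cy m + cy m') : ℤ) • g := by
        rw [← hcy, add_smul, ← hcy, ← hcy, map_add]
      have h := hcast _ _ this
      push_cast at h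
      exact h
    have hsmul_congr : ∀ (k l : ℤ) (z : M), (k : ZMod e) = (l : ZMod e) → e • z = 0 →
        k • z = l • z := by
      intro k l z hkl hz
      have : ((k - l : ℤ) : ZMod e) = 0 := by push_cast; rw [hkl]; ring
      have hd := (ZMod.intCast_zmod_eq_zero_iff_dvd _ e).mp this
      obtain ⟨t, ht⟩ := hd
      have hk : k = l + t * (e : ℤ) := by rw [mul_comm] at ht; omega
      have h1 : (e : ℤ) • z = 0 := by rw [natCast_zsmul]; exact hz
      rw [hk, add_smul, mul_smul, h1, smul_zero, add_zero]
    have hezx : e • x = 0 := hez x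
    have hezy : e • y = 0 := hez y
    set Φ : M →+ (ZMod e × ZMod e) × ↥P := AddMonoidHom.mk'
      (fun m => ((-(cy m : ZMod e), (cx m : ZMod e)), ⟨m + cy m • x - cx m • y, hπ m⟩))
      (by
        intro m m'
        refine Prod.ext (Prod.ext ?_ ?_) (Subtype.ext ?_)
        · show -(cy (m + m') : ZMod e) = -(cy m : ZMod e) + -(cy m' : ZMod e)
          rw [hcy_add]; ring
        · show (cx (m + m') : ZMod e) = (cx m : ZMod e) + (cx m' : ZMod e)
          rw [hcx_add]
        · show (m + m') + cy (m + m') • x - cx (m + m') • y =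
            (m + cy m • x - cx m • y) + (m' + cy m' • x - cx m' • y)
          have h1 : cy (m + m') • x = ((cy m + cy m') : ℤ) • x := by
            apply hsmul_congr _ _ _ _ hezx
            rw [hcy_add]; push_cast; ring
          have h2 : cx (m + m') • y = ((cx m + cx m') : ℤ) • y := by
            apply hsmul_congr _ _ _ _ hezy
            rw [hcx_add]; push_cast; ring
          rw [h1, h2, add_smul, add_smul]
          abel) with hΦ
    have hinj : Function.Injective Φ := by
      rw [injective_iff_map_eq_zero]
      intro m hm
      have h1 : -(cy m : ZMod e) = 0 := congrArg (fun p => p.1.1) hm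
      have h2 : (cx m : ZMod e) = 0 := congrArg (fun p => p.1.2) hm
      have h3 : m + cy m • x - cx m • y = 0 := congrArg (fun p => (p.2 : M)) hm
      rw [neg_eq_zero] at h1
      have hx0 : cy m • x = 0 :=
        hEz x _ ((ZMod.intCast_zmod_eq_zero_iff_dvd _ e).mp h1)
      have hy0 : cx m • y = 0 :=
        hEz y _ ((ZMod.intCast_zmod_eq_zero_iff_dvd _ e).mp h2)
      rw [hx0, hy0, add_zero, sub_zero] at h3
      exact h3
    have hsurj : Function.Surjective Φ := by
      rintro ⟨⟨a', c'⟩, p, hp⟩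
      rw [hmemP] at hp
      set m : M := ((a'.val : ℤ)) • x + ((c'.val : ℤ)) • y + p with hm
      have hbxm : b x m = ((c'.val : ℤ)) • g := by
        rw [hm, map_add, map_add, map_zsmul, map_zsmul, halt, smul_zero, zero_add,
          hp.1, add_zero, ← hg]
      have hbym : b y m = (-(a'.val : ℤ)) • g := by
        rw [hm, map_add, map_add, map_zsmul, map_zsmul, halt, smul_zero, add_zero,
          hp.2, add_zero, hyx, smul_neg, ← neg_zsmul]
      have hcxm : (cx m : ZMod e) = c' := by
        have := hcast _ _ (by rw [← hcx, hbxm] : cx m • g = ((c'.val : ℤ)) • g)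
        rw [this]
        push_cast
        simp [ZMod.natCast_val, ZMod.cast_id]
      have hcym : (cy m : ZMod e) = -(a' : ZMod e) := by
        have := hcast _ _ (by rw [← hcy, hbym] : cy m • g = (-(a'.val : ℤ)) • g)
        rw [this]
        push_cast
        simp [ZMod.natCast_val, ZMod.cast_id]
      refine ⟨m, ?_⟩
      refine Prod.ext (Prod.ext ?_ ?_) (Subtype.ext ?_)
      · show -(cy m : ZMod e) = a'
        rw [hcym, neg_neg]
      · show (cx m : ZMod e) = c'
        exact hcxm
      · show m + cy m • x - cx m • y = p
        have h1 : cy m • x = (-(a'.val : ℤ)) • x := by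
          apply hsmul_congr _ _ _ _ hezx
          rw [hcym]; push_cast; simp [ZMod.natCast_val, ZMod.cast_id]
        have h2 : cx m • y = ((c'.val : ℤ)) • y := by
          apply hsmul_congr _ _ _ _ hezy
          rw [hcxm]; push_cast; simp [ZMod.natCast_val, ZMod.cast_id]
        rw [h1, h2, hm, neg_zsmul]
        abel
    have equiv1 : M ≃+ (ZMod e × ZMod e) × ↥P := AddEquiv.ofBijective Φ ⟨hinj, hsurj⟩
    -- restricted pairing on P
    set bP : ↥P →+ ↥P →+ AddCircle (1:ℚ) :=
      { toFun := fun p => (b p).comp P.subtype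
        map_zero' := by ext q; simp
        map_add' := by intro p q; ext r; simp } with hbP
    have haltP : ∀ p : ↥P, bP p p = 0 := fun p => halt p
    have hndP : ∀ p : ↥P, (∀ q : ↥P, bP p q = 0) → p = 0 := by
      intro p hpq
      have hpP := p.2
      rw [hmemP] at hpP
      have hbpx : b (p : M) x = 0 := by rw [hskew, hpP.1, neg_zero]
      have hbpy : b (p : M) y = 0 := by rw [hskew, hpP.2, neg_zero]
      have hp0 : (p : M) = 0 := by
        apply hnd
        intro z
        have hzdec : z = (z + cy z • x - cx z • y) + cx z • y - cy z • x := by abel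
        rw [hzdec, map_sub, map_add, map_zsmul, map_zsmul, hbpx, hbpy, smul_zero, smul_zero,
          add_zero, sub_zero]
        exact hpq ⟨_, hπ z⟩
      exact Subtype.ext hp0
    -- cardinality comparison
    have hcardeq : Nat.card M = e * e * Nat.card ↥P := by
      rw [Nat.card_congr equiv1.toEquiv, Nat.card_prod, Nat.card_prod, Nat.card_zmod]
    have hPpos : 0 < Nat.card ↥P := Nat.card_pos
    have hPlt : Nat.card ↥P < Nat.card M := by
      rw [hcardeq]
      exact (Nat.lt_mul_iff_one_lt_left hPpos).mpr (one_lt_mul he1.le he1)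
    obtain ⟨T', instT', finT', ⟨eq2⟩⟩ :=
      ih (Nat.card ↥P) (lt_of_lt_of_le hPlt hcard) ↥P bP haltP hndP le_rfl
    refine ⟨ZMod e × T', inferInstance, inferInstance, ⟨?_⟩⟩
    exact equiv1.trans ((AddEquiv.prodCongr (AddEquiv.refl (ZMod e × ZMod e)) eq2).trans
      (AddEquiv.prodProdProdComm (ZMod e) (ZMod e) T' T'))

/-- A finite abelian group with a nondegenerate alternating pairing into `ℚ/ℤ` is
isomorphic to `T × T` for some finite abelian group `T`; in particular its order is a
square and its exponent divides the square root `#T` of its order. -/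
theorem stmt_10 (M : Type*) [AddCommGroup M] [Finite M]
    (b : M →+ M →+ AddCircle (1 : ℚ))
    (halt : ∀ x : M, b x x = 0)
    (hnondeg : ∀ x : M, (∀ y : M, b x y = 0) → x = 0) :
    ∃ (T : Type) (_ : AddCommGroup T) (_ : Finite T),
      Nonempty (M ≃+ T × T) ∧ Nat.card M = Nat.card T ^ 2 ∧
        AddMonoid.exponent M ∣ Nat.card T := by
  obtain ⟨T, instT, finT, ⟨eqv⟩⟩ := aux_sq (Nat.card M) M b halt hnondeg le_rfl
  refine ⟨T, instT, finT, ⟨eqv⟩, ?_, ?_⟩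
  · rw [Nat.card_congr eqv.toEquiv, Nat.card_prod, sq]
  · refine AddMonoid.exponent_dvd_iff_forall_nsmul_eq_zero.mpr ?_
    intro m
    apply eqv.injective
    rw [map_nsmul, map_zero]
    refine Prod.ext ?_ ?_ <;> simp
end
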